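/- arXiv:1802.03746 — 3 statements merged into one kernel-verified Lean document; each statement's English description precedes it below -/
import Mathlib

section
/- Conservation of the first moment under the Dirac–Frenkel variational principle (Theorem 1 of the paper): Let E be a complex inner product space, let H and A be symmetric linear operators on E (i.e. ⟪H x, y⟫ = ⟪x, H y⟫ and ⟪A x, y⟫ = ⟪x, A y⟫ for all x, y ∈ E) with A ∘ H = H ∘ A. Let ψ : ℝ → E be a curve such that at every time t, ψ has derivative ψ'(t), the map t ↦ A(ψ t) has derivative A(ψ'(t)), and the Dirac–Frenkel condition ⟪A(ψ t), H(ψ t) − i • ψ'(t)⟫ = 0 holds (expressing that A ψ lies in the space of allowed variations). Then the expectation value t ↦ ⟪ψ t, A(ψ t)⟫ has derivative zero at every t; i.e. ⟨A⟩ is constant in time. -/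
local notation "⟪" x ", " y "⟫" => @inner ℂ _ _ x y

/-- **Conservation of the first moment under the Dirac–Frenkel variational principle.**
If `H` and `A` are symmetric linear operators on a complex inner product space that
commute, and the curve `ψ` satisfies the Dirac–Frenkel condition with `A ψ` among the
allowed variations, then the expectation value `⟪ψ t, A (ψ t)⟫` has derivative zero. -/
theorem dirac_frenkel_first_moment_conserved
    {E : Type*} [NormedAddCommGroup E] [InnerProductSpace ℂ E]
    (H A : E →ₗ[ℂ] E)
    (hH : ∀ x y : E, ⟪H x, y⟫ = ⟪x, H y⟫)
    (hA : ∀ x y : E, ⟪A x, y⟫ = ⟪x, A y⟫)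
    (hcomm : ∀ x : E, A (H x) = H (A x))
    (ψ ψ' : ℝ → E)
    (hψ : ∀ t : ℝ, HasDerivAt ψ (ψ' t) t)
    (hAψ : ∀ t : ℝ, HasDerivAt (fun s => A (ψ s)) (A (ψ' t)) t)
    (hDF : ∀ t : ℝ, ⟪A (ψ t), H (ψ t) - Complex.I • ψ' t⟫ = 0) :
    ∀ t : ℝ, HasDerivAt (fun s => ⟪ψ s, A (ψ s)⟫) 0 t := by
  intro t
  have h1 := (hψ t).inner (𝕜 := ℂ) (hAψ t)
  -- derivative value: ⟪ψ t, A (ψ' t)⟫ + ⟪ψ' t, A (ψ t)⟫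
  have hc : ⟪A (ψ t), H (ψ t)⟫ = Complex.I * ⟪A (ψ t), ψ' t⟫ := by
    have h := hDF t
    rw [inner_sub_right, inner_smul_right, sub_eq_zero] at h
    exact h
  have hreal : (starRingEnd ℂ) ⟪A (ψ t), H (ψ t)⟫ = ⟪A (ψ t), H (ψ t)⟫ := by
    rw [inner_conj_symm, hH, ← hcomm, ← hA]
  set c : ℂ := ⟪A (ψ t), ψ' t⟫ with hcdef
  have hkey : c + (starRingEnd ℂ) c = 0 := by
    have h2 : Complex.I * c = - (Complex.I * (starRingEnd ℂ) c) := by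
      have := hreal
      rw [hc] at this
      simpa [map_mul, Complex.conj_I, neg_mul] using this.symm
    have h3 : Complex.I * (c + (starRingEnd ℂ) c) = 0 := by
      rw [mul_add, h2]; ring
    have hI : (Complex.I : ℂ) ≠ 0 := Complex.I_ne_zero
    exact (mul_eq_zero.mp h3).resolve_left hI
  have heq : ⟪ψ t, A (ψ' t)⟫ + ⟪ψ' t, A (ψ t)⟫ = 0 := by
    have h4 : ⟪ψ' t, A (ψ t)⟫ = (starRingEnd ℂ) c := (inner_conj_symm _ _).symm
    rw [← hA, h4]; exact hkey
  rw [← heq]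
  exact h1
end

section
/- Vanishing of the Gross-Pitaevskii violation integral for the first angular momentum moment (Eq. (32) of the paper): let σ₀ > 0, x₀, y₀, p₀ ∈ ℝ and define φ : ℝ² → ℂ by φ(x,y) = (π σ₀²)^{−1/2} exp(−((x−x₀)² + (y−y₀)²)/(2σ₀²)) · exp(i p₀ x). Then Im ∫_{ℝ²} conj(φ(x,y)) · |φ(x,y)|² · (−i)·(x·∂φ/∂y (x,y) − y·∂φ/∂x (x,y)) dx dy = 0. By the mean-field moment-derivative formula d/dt⟨aⁿ⟩ = −2λ Im⟨φ| |φ|² aⁿ |φ⟩, this expresses that d/dt ⟨L_z⟩_GP = 0 at this state. -/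
open Real Complex MeasureTheory

/-!
On the orbital `φ = N · exp(-|z - z₀|² / (2σ²)) · exp(i p₀ x)` the logarithmic derivatives are
`∂_y φ / φ = -(y - y₀)/σ²` and `∂_x φ / φ = -(x - x₀)/σ² + i p₀`, so the imaginary part of the
integrand `conj φ · |φ|² · l_z φ` is `|φ|⁴ (x₀ y - y₀ x) / σ²`: the boost drops out, and what is
left is odd under the point reflection `z ↦ 2 z₀ - z`, which preserves `|φ|` and Lebesgue measure.
-/

theorem integral_eq_zero_of_sub_left_eq_neg {G E : Type*} [MeasurableSpace G] [AddGroup G]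
    [MeasurableAdd G] [MeasurableNeg G] [NormedAddCommGroup E] [NormedSpace ℝ E]
    {μ : Measure G} [μ.IsAddLeftInvariant] [μ.IsNegInvariant] {f : G → E} {g : G}
    (hf : ∀ x, f (g - x) = -f x) : ∫ x, f x ∂μ = 0 := by
  have : IsAddTorsionFree E := .of_isTorsionFree ℝ E
  simp_rw [← self_eq_neg, ← integral_neg, ← hf, integral_sub_left_eq_self]

theorem im_integral_eq_zero_of_im_sub_left_eq_neg {G : Type*} [MeasurableSpace G] [AddGroup G]
    [MeasurableAdd G] [MeasurableNeg G] {μ : Measure G} [μ.IsAddLeftInvariant]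
    [μ.IsNegInvariant] {f : G → ℂ} {g : G} (hf : ∀ x, (f (g - x)).im = -(f x).im) :
    (∫ x, f x ∂μ).im = 0 := by
  by_cases hint : Integrable f μ
  · calc (∫ x, f x ∂μ).im = ∫ x, (f x).im ∂μ := (integral_im hint).symm
      _ = 0 := integral_eq_zero_of_sub_left_eq_neg hf
  · simp [integral_undef hint]

noncomputable def lzViolationIntegrand (φ : ℝ → ℝ → ℂ) (z : ℝ × ℝ) : ℂ :=
  (starRingEnd ℂ) (φ z.1 z.2) * (‖φ z.1 z.2‖ ^ 2 : ℂ)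
    * (-I * ((z.1 : ℂ) * deriv (fun y : ℝ => φ z.1 y) z.2
      - (z.2 : ℂ) * deriv (fun x : ℝ => φ x z.2) z.1))

theorem im_lzViolationIntegrand_of_hasDerivAt {φ : ℝ → ℝ → ℂ} {x y a b p : ℝ}
    (hy : HasDerivAt (fun y => φ x y) (φ x y * a) y)
    (hx : HasDerivAt (fun x => φ x y) (φ x y * (b + I * p)) x) :
    (lzViolationIntegrand φ (x, y)).im = ‖φ x y‖ ^ 4 * (y * b - x * a) := by
  set w := φ x y
  have hconj : (starRingEnd ℂ) w * w = (‖w‖ : ℂ) ^ 2 := Complex.conj_mul' w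
  have key : lzViolationIntegrand φ (x, y) =
      ((‖w‖ ^ 4 * (y * b - x * a) : ℝ) : ℂ) * I - ((‖w‖ ^ 4 * y * p : ℝ) : ℂ) := by
    rw [lzViolationIntegrand, hy.deriv, hx.deriv]
    push_cast
    linear_combination (‖w‖ ^ 2 * (-I * (x * a - y * (b + I * p))) : ℂ) * hconj
      + (‖w‖ ^ 4 * y * p : ℂ) * I_sq
  rw [key, sub_im, mul_I_im, ofReal_re, ofReal_im, sub_zero]

noncomputable def boostedGaussian (N : ℂ) (σ x₀ y₀ p₀ : ℝ) (x y : ℝ) : ℂ :=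
  N * Complex.exp (-(((x - x₀ : ℝ) : ℂ) ^ 2 + ((y - y₀ : ℝ) : ℂ) ^ 2) / (2 * (σ : ℂ) ^ 2))
    * Complex.exp (I * p₀ * x)

theorem hasDerivAt_ofReal_sub_sq (c t : ℝ) :
    HasDerivAt (fun t : ℝ => ((t - c : ℝ) : ℂ) ^ 2) (2 * ((t - c : ℝ) : ℂ)) t := by
  simpa using (((hasDerivAt_id t).sub_const c).ofReal_comp.fun_pow 2)

section boostedGaussian

variable (N : ℂ) (σ x₀ y₀ p₀ x y : ℝ)

theorem hasDerivAt_boostedGaussian_snd :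
    HasDerivAt (fun y => boostedGaussian N σ x₀ y₀ p₀ x y)
      (boostedGaussian N σ x₀ y₀ p₀ x y * ((-(y - y₀) / σ ^ 2 : ℝ) : ℂ)) y := by
  have := ((((hasDerivAt_ofReal_sub_sq y₀ y).const_add (((x - x₀ : ℝ) : ℂ) ^ 2)).fun_neg
    |>.div_const (2 * (σ : ℂ) ^ 2)).cexp.const_mul N).mul_const (Complex.exp (I * p₀ * x))
  simp only [boostedGaussian] at this ⊢
  exact this.congr_deriv (by push_cast; ring)

theorem hasDerivAt_boostedGaussian_fst :
    HasDerivAt (fun x => boostedGaussian N σ x₀ y₀ p₀ x y)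
      (boostedGaussian N σ x₀ y₀ p₀ x y * ((-(x - x₀) / σ ^ 2 : ℝ) + I * p₀)) x := by
  have hphase : HasDerivAt (fun x : ℝ => Complex.exp (I * p₀ * x))
      (Complex.exp (I * p₀ * x) * (I * p₀)) x := by
    simpa using ((hasDerivAt_id x).ofReal_comp.const_mul (I * (p₀ : ℂ))).cexp
  have := ((((hasDerivAt_ofReal_sub_sq x₀ x).add_const (((y - y₀ : ℝ) : ℂ) ^ 2)).fun_neg
    |>.div_const (2 * (σ : ℂ) ^ 2)).cexp.const_mul N).fun_mul hphase
  simp only [boostedGaussian] at this ⊢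
  exact this.congr_deriv (by push_cast; ring)

theorem norm_boostedGaussian :
    ‖boostedGaussian N σ x₀ y₀ p₀ x y‖ =
      ‖N‖ * Real.exp (-((x - x₀) ^ 2 + (y - y₀) ^ 2) / (2 * σ ^ 2)) := by
  rw [boostedGaussian, norm_mul, norm_mul, Complex.norm_exp, Complex.norm_exp]
  norm_cast
  simp

theorem norm_boostedGaussian_reflect :
    ‖boostedGaussian N σ x₀ y₀ p₀ (2 * x₀ - x) (2 * y₀ - y)‖ =
      ‖boostedGaussian N σ x₀ y₀ p₀ x y‖ := by
  rw [norm_boostedGaussian, norm_boostedGaussian]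
  ring_nf

theorem im_lzViolationIntegrand_boostedGaussian :
    (lzViolationIntegrand (boostedGaussian N σ x₀ y₀ p₀) (x, y)).im =
      ‖boostedGaussian N σ x₀ y₀ p₀ x y‖ ^ 4 * ((x₀ * y - y₀ * x) / σ ^ 2) := by
  rw [im_lzViolationIntegrand_of_hasDerivAt (hasDerivAt_boostedGaussian_snd ..)
    (hasDerivAt_boostedGaussian_fst ..)]
  ring

end boostedGaussian

theorem gp_first_lz_moment_violation_integral_vanishes_general
    (σ₀ x₀ y₀ p₀ : ℝ) (φ : ℝ → ℝ → ℂ)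
    (hφ : ∀ x y : ℝ, φ x y =
      (((π * σ₀ ^ 2) ^ (-(1 / 2 : ℝ)) : ℝ) : ℂ)
        * Complex.exp (-(((x - x₀ : ℝ) : ℂ) ^ 2 + ((y - y₀ : ℝ) : ℂ) ^ 2)
            / (2 * (σ₀ : ℂ) ^ 2))
        * Complex.exp (Complex.I * (p₀ : ℂ) * (x : ℂ))) :
    (∫ z : ℝ × ℝ, (starRingEnd ℂ) (φ z.1 z.2) * (‖φ z.1 z.2‖ ^ 2 : ℂ)
        * (-Complex.I * ((z.1 : ℂ) * deriv (fun y : ℝ => φ z.1 y) z.2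
            - (z.2 : ℂ) * deriv (fun x : ℝ => φ x z.2) z.1))).im = 0 := by
  obtain rfl : φ = boostedGaussian _ σ₀ x₀ y₀ p₀ := funext₂ hφ
  refine im_integral_eq_zero_of_im_sub_left_eq_neg (f := lzViolationIntegrand _)
    (g := (2 * x₀, 2 * y₀)) fun ⟨x, y⟩ => ?_
  rw [Prod.mk_sub_mk, im_lzViolationIntegrand_boostedGaussian,
    im_lzViolationIntegrand_boostedGaussian, norm_boostedGaussian_reflect]
  ring

/-- **Vanishing of the Gross-Pitaevskii violation integral for the first angular
momentum moment (Eq. (32)).** For the boosted displaced Gaussian orbital,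
`Im ⟪φ, |φ|² l_z φ⟫ = 0`, expressing `d/dt ⟨L_z⟩_GP = 0`. -/
theorem gp_first_lz_moment_violation_integral_vanishes
    (σ₀ x₀ y₀ p₀ : ℝ) (hσ : 0 < σ₀) (φ : ℝ → ℝ → ℂ)
    (hφ : ∀ x y : ℝ, φ x y =
      (((π * σ₀ ^ 2) ^ (-(1 / 2 : ℝ)) : ℝ) : ℂ)
        * Complex.exp (-(((x - x₀ : ℝ) : ℂ) ^ 2 + ((y - y₀ : ℝ) : ℂ) ^ 2)
            / (2 * (σ₀ : ℂ) ^ 2))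
        * Complex.exp (Complex.I * (p₀ : ℂ) * (x : ℂ))) :
    (∫ z : ℝ × ℝ, (starRingEnd ℂ) (φ z.1 z.2) * (‖φ z.1 z.2‖ ^ 2 : ℂ)
        * (-Complex.I * ((z.1 : ℂ) * deriv (fun y : ℝ => φ z.1 y) z.2
            - (z.2 : ℂ) * deriv (fun x : ℝ => φ x z.2) z.1))).im = 0 :=
  gp_first_lz_moment_violation_integral_vanishes_general σ₀ x₀ y₀ p₀ φ hφ
end

section
/- Gross-Pitaevskii violation of momentum conservation (Eq. (41) of the paper): let σ₀ > 0, x₀, p₀ ∈ ℝ and define φ : ℝ → ℂ by φ(x) = (π σ₀²)^{−1/4} exp(−(x−x₀)²/(2σ₀²)) · exp(i p₀ x²). Then Im ∫_ℝ conj(φ(x)) · |φ(x)|² · (−φ''(x)) dx = −p₀ / √(2π σ₀²). By d/dt⟨A²⟩_GP = −2Nλ Im⟨φ| |φ|² a² |φ⟩ this yields d/dt⟨P²⟩_GP = N λ · 2 p₀ / √(2π σ₀²) ≠ 0 whenever λ p₀ ≠ 0, an explicit violation of total momentum conservation ([H,P] = 0 in free space) by the Gross-Pitaevskii mean field. -/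
/-!
Write `φ = c · exp g` with `g x = -(x - x₀)² / (2σ₀²) + i p₀ x²`. Then `φ'' = φ (g'² + g'')`, so
the integrand is `-|φ|⁴ (g'² + g'')`, where `|φ|⁴ = (πσ₀²)⁻¹ exp (-2(x - x₀)²/σ₀²)`. Since
`Im (g'² + g'') = 2 Re g' Im g' + Im g'' = p₀ (2 - 4x(x - x₀)/σ₀²)`, the imaginary part of the
integrand is `-p₀ (|φ|⁴ + (x |φ|⁴)')`. The total derivative integrates to zero, leaving
`-p₀ ∫ |φ|⁴ = -p₀ / √(2πσ₀²)`.
-/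

open Real Complex MeasureTheory

open Polynomial in
theorem integrable_eval_mul_exp_neg_mul_sq {𝕜 : Type*} [RCLike 𝕜] {b : ℝ} (hb : 0 < b)
    (P : 𝕜[X]) : Integrable fun x : ℝ => P.eval (x : 𝕜) * (rexp (-b * x ^ 2) : 𝕜) := by
  simp_rw [eval_eq_sum_range, Finset.sum_mul]
  refine integrable_finsetSum _ fun i _ => ?_
  have h := (integrable_rpow_mul_exp_neg_mul_sq hb
    (neg_one_lt_zero.trans_le i.cast_nonneg)).ofReal (𝕜 := 𝕜)
  simpa [Real.rpow_natCast, mul_assoc] using h.const_mul (P.coeff i)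

open Polynomial in
theorem integrable_eval_mul_exp_neg_mul_sub_sq {𝕜 : Type*} [RCLike 𝕜] {b : ℝ} (hb : 0 < b)
    (x₀ : ℝ) (P : 𝕜[X]) :
    Integrable fun x : ℝ => P.eval (x : 𝕜) * (rexp (-b * (x - x₀) ^ 2) : 𝕜) := by
  convert (integrable_eval_mul_exp_neg_mul_sq hb (P.comp (X + C (x₀ : 𝕜)))).comp_sub_right x₀
    using 3
  simp

theorem integral_exp_neg_mul_sub_sq (b x₀ : ℝ) :
    ∫ x, rexp (-b * (x - x₀) ^ 2) = √(π / b) :=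
  (integral_sub_right_eq_self (fun x => rexp (-b * x ^ 2)) x₀).trans (integral_gaussian b)

open Polynomial in
theorem integral_exp_neg_mul_sub_sq_mul_two_sub {b : ℝ} (hb : 0 < b) (x₀ : ℝ) :
    ∫ x, rexp (-b * (x - x₀) ^ 2) * (2 - 2 * b * x * (x - x₀)) = √(π / b) := by
  have hderiv (x : ℝ) : HasDerivAt (fun x => x * rexp (-b * (x - x₀) ^ 2))
      (rexp (-b * (x - x₀) ^ 2) * (1 - 2 * b * x * (x - x₀))) x := by
    have hexponent : HasDerivAt (fun x => -b * (x - x₀) ^ 2) (-b * (2 * (x - x₀))) x := by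
      simpa using (((hasDerivAt_id' x).sub_const x₀).pow 2).const_mul (-b)
    exact ((hasDerivAt_id' x).fun_mul hexponent.exp).congr_deriv (by ring)
  have hint (P : ℝ[X]) := integrable_eval_mul_exp_neg_mul_sub_sq hb x₀ P
  have hgauss : Integrable fun x => rexp (-b * (x - x₀) ^ 2) := by simpa using hint 1
  have hderiv_int : Integrable fun x => rexp (-b * (x - x₀) ^ 2) * (1 - 2 * b * x * (x - x₀)) :=
    (hint (1 - C (2 * b) * X * (X - C x₀))).congr (.of_forall fun x => by simp; ring)
  have htotal := integral_eq_zero_of_hasDerivAt_of_integrable hderiv hderiv_int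
    (by simpa using hint X)
  calc ∫ x, rexp (-b * (x - x₀) ^ 2) * (2 - 2 * b * x * (x - x₀))
      = ∫ x, (rexp (-b * (x - x₀) ^ 2)
          + rexp (-b * (x - x₀) ^ 2) * (1 - 2 * b * x * (x - x₀))) := by
        congr 1 with x
        ring
    _ = √(π / b) := by
        rw [integral_add hgauss hderiv_int, htotal, integral_exp_neg_mul_sub_sq, add_zero]

theorem deriv_deriv_const_mul_cexp {g g' : ℝ → ℂ} {g'' : ℂ} (a : ℂ)
    (hg : ∀ y, HasDerivAt g (g' y) y) {x : ℝ} (hg' : HasDerivAt g' g'' x) :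
    deriv (deriv fun y => a * cexp (g y)) x = a * cexp (g x) * (g' x ^ 2 + g'') := by
  have hfirst : deriv (fun y => a * cexp (g y)) = fun y => a * cexp (g y) * g' y :=
    funext fun y => (((hg y).cexp).const_mul a).deriv.trans (mul_assoc ..).symm
  rw [hfirst, ((((hg x).cexp).const_mul a).fun_mul hg').deriv]
  ring

theorem conj_mul_norm_sq_mul_mul (z w : ℂ) :
    (starRingEnd ℂ) z * (‖z‖ ^ 2 : ℂ) * (z * w) = ((‖z‖ ^ 4 : ℝ) : ℂ) * w := by
  rw [show (starRingEnd ℂ) z * (‖z‖ ^ 2 : ℂ) * (z * w)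
      = (starRingEnd ℂ) z * z * (‖z‖ ^ 2 * w) by ring, Complex.conj_mul']
  push_cast
  ring

theorem inv_mul_sqrt_div_two {t : ℝ} (ht : 0 ≤ t) : t⁻¹ * √(t / 2) = (√(2 * t))⁻¹ := by
  rcases ht.eq_or_lt with rfl | ht
  · simp
  have hprod : √(t / 2) * √(2 * t) = t := by
    rw [← Real.sqrt_mul (by positivity), show t / 2 * (2 * t) = t ^ 2 by ring, Real.sqrt_sq ht.le]
  exact eq_inv_of_mul_eq_one_left (by rw [mul_assoc, hprod, inv_mul_cancel₀ ht.ne'])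

section ChirpedGaussian

variable (σ₀ x₀ p₀ : ℝ)

noncomputable def chirpedGaussian (x : ℝ) : ℂ :=
  (((π * σ₀ ^ 2) ^ (-(1 / 4 : ℝ)) : ℝ) : ℂ)
    * cexp (-((x - x₀ : ℝ) : ℂ) ^ 2 / (2 * (σ₀ : ℂ) ^ 2)) * cexp (I * p₀ * x ^ 2)

noncomputable def chirpPhase (x : ℝ) : ℂ :=
  -((x - x₀ : ℝ) : ℂ) ^ 2 / (2 * (σ₀ : ℂ) ^ 2) + I * p₀ * x ^ 2

noncomputable def chirpPhaseDeriv (x : ℝ) : ℂ :=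
  -((x - x₀ : ℝ) : ℂ) / (σ₀ : ℂ) ^ 2 + 2 * I * p₀ * x

noncomputable def chirpPhaseDeriv2 : ℂ := -1 / (σ₀ : ℂ) ^ 2 + 2 * I * p₀

theorem chirpedGaussian_eq_mul_cexp : chirpedGaussian σ₀ x₀ p₀ =
    fun x => (((π * σ₀ ^ 2) ^ (-(1 / 4 : ℝ)) : ℝ) : ℂ) * cexp (chirpPhase σ₀ x₀ p₀ x) := by
  ext x
  rw [chirpedGaussian, chirpPhase, Complex.exp_add, mul_assoc]

variable {σ₀}

theorem hasDerivAt_chirpPhase (x : ℝ) :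
    HasDerivAt (chirpPhase σ₀ x₀ p₀) (chirpPhaseDeriv σ₀ x₀ p₀ x) x := by
  have h : HasDerivAt (fun z : ℂ => -(z - x₀) ^ 2 / (2 * (σ₀ : ℂ) ^ 2) + I * p₀ * z ^ 2)
      (-(2 * (x - x₀)) / (2 * (σ₀ : ℂ) ^ 2) + I * p₀ * (2 * x)) x := by
    simpa using
      ((((hasDerivAt_id' (x : ℂ)).sub_const (x₀ : ℂ)).fun_pow 2).fun_neg.div_const _).fun_add
        ((hasDerivAt_pow 2 (x : ℂ)).const_mul (I * p₀))
  convert h.comp_ofReal using 1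
  · ext y
    simp [chirpPhase]
  · simp only [chirpPhaseDeriv]
    push_cast
    field_simp

theorem hasDerivAt_chirpPhaseDeriv (x : ℝ) :
    HasDerivAt (chirpPhaseDeriv σ₀ x₀ p₀) (chirpPhaseDeriv2 σ₀ p₀) x := by
  have h : HasDerivAt (fun z : ℂ => -(z - x₀) / (σ₀ : ℂ) ^ 2 + 2 * I * p₀ * z)
      (chirpPhaseDeriv2 σ₀ p₀) x := by
    simpa [chirpPhaseDeriv2] using
      (((hasDerivAt_id' (x : ℂ)).sub_const (x₀ : ℂ)).fun_neg.div_const _).fun_add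
        ((hasDerivAt_id' (x : ℂ)).const_mul (2 * I * p₀))
  convert h.comp_ofReal using 1
  ext y
  simp [chirpPhaseDeriv]

theorem deriv_deriv_chirpedGaussian (x : ℝ) :
    deriv (deriv (chirpedGaussian σ₀ x₀ p₀)) x = chirpedGaussian σ₀ x₀ p₀ x *
      (chirpPhaseDeriv σ₀ x₀ p₀ x ^ 2 + chirpPhaseDeriv2 σ₀ p₀) := by
  rw [chirpedGaussian_eq_mul_cexp]
  exact deriv_deriv_const_mul_cexp _ (hasDerivAt_chirpPhase x₀ p₀)
    (hasDerivAt_chirpPhaseDeriv x₀ p₀ x)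

theorem re_chirpPhase (x : ℝ) :
    (chirpPhase σ₀ x₀ p₀ x).re = -(x - x₀) ^ 2 / (2 * σ₀ ^ 2) := by
  have h : chirpPhase σ₀ x₀ p₀ x
      = ((-(x - x₀) ^ 2 / (2 * σ₀ ^ 2) : ℝ) : ℂ) + ((p₀ * x ^ 2 : ℝ) : ℂ) * I := by
    rw [chirpPhase]
    push_cast
    ring
  rw [h, Complex.add_re, Complex.ofReal_re, Complex.re_ofReal_mul, Complex.I_re, mul_zero,
    add_zero]

theorem norm_chirpedGaussian_pow_four (hσ : 0 < σ₀) (x : ℝ) :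
    ‖chirpedGaussian σ₀ x₀ p₀ x‖ ^ 4
      = (π * σ₀ ^ 2)⁻¹ * rexp (-(2 / σ₀ ^ 2) * (x - x₀) ^ 2) := by
  have hπσ : 0 < π * σ₀ ^ 2 := by positivity
  have hnormalization : ((π * σ₀ ^ 2) ^ (-(1 / 4 : ℝ))) ^ 4 = (π * σ₀ ^ 2)⁻¹ := by
    rw [← Real.rpow_natCast, ← Real.rpow_mul hπσ.le]
    norm_num [Real.rpow_neg_one]
  rw [chirpedGaussian_eq_mul_cexp, norm_mul, Complex.norm_real, Complex.norm_exp, re_chirpPhase,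
    Real.norm_of_nonneg (by positivity), mul_pow, hnormalization, ← Real.exp_nat_mul]
  congr 2
  field_simp
  ring

theorem chirpPhaseDeriv_eq (x : ℝ) : chirpPhaseDeriv σ₀ x₀ p₀ x
    = ((-(x - x₀) / σ₀ ^ 2 : ℝ) : ℂ) + ((2 * p₀ * x : ℝ) : ℂ) * I := by
  rw [chirpPhaseDeriv]
  push_cast
  ring

theorem im_chirpPhaseDeriv_sq_add (x : ℝ) :
    (chirpPhaseDeriv σ₀ x₀ p₀ x ^ 2 + chirpPhaseDeriv2 σ₀ p₀).im
      = p₀ * (2 - 2 * (2 / σ₀ ^ 2) * x * (x - x₀)) := by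
  have h : chirpPhaseDeriv2 σ₀ p₀ = ((-1 / σ₀ ^ 2 : ℝ) : ℂ) + ((2 * p₀ : ℝ) : ℂ) * I := by
    rw [chirpPhaseDeriv2]
    push_cast
    ring
  rw [chirpPhaseDeriv_eq, h]
  simp only [sq, Complex.add_im, Complex.mul_im, Complex.add_re, Complex.mul_re,
    Complex.ofReal_re, Complex.ofReal_im, Complex.I_re, Complex.I_im]
  ring

open Polynomial in
theorem integrable_exp_mul_chirpPhaseDeriv_sq_add (hσ : 0 < σ₀) :
    Integrable fun x : ℝ => ((rexp (-(2 / σ₀ ^ 2) * (x - x₀) ^ 2) : ℝ) : ℂ) *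
      (chirpPhaseDeriv σ₀ x₀ p₀ x ^ 2 + chirpPhaseDeriv2 σ₀ p₀) := by
  refine (integrable_eval_mul_exp_neg_mul_sub_sq (by positivity : 0 < 2 / σ₀ ^ 2) x₀
    ((C (chirpPhaseDeriv2 σ₀ p₀) * X + C ((x₀ : ℂ) / σ₀ ^ 2)) ^ 2
      + C (chirpPhaseDeriv2 σ₀ p₀))).congr (.of_forall fun x => ?_)
  simp only [eval_add, eval_pow, eval_mul, eval_C, eval_X, chirpPhaseDeriv, chirpPhaseDeriv2,
    Complex.ofReal_sub, RCLike.ofReal_eq_complex_ofReal]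
  ring

end ChirpedGaussian

/-- **Gross-Pitaevskii violation of momentum conservation (Eq. (41)).**
For the momentum-chirped Gaussian orbital,
`Im ⟪φ, |φ|² p² φ⟫ = -p₀ / √(2π σ₀²)` with `(p² φ)(x) = -φ''(x)`, so that
`d/dt ⟨P²⟩_GP = 2 N λ p₀ / √(2π σ₀²) ≠ 0` whenever `λ p₀ ≠ 0`. -/
theorem gp_violation_momentum_squared
    (σ₀ x₀ p₀ : ℝ) (hσ : 0 < σ₀) (φ : ℝ → ℂ)
    (hφ : ∀ x : ℝ, φ x =
      (((π * σ₀ ^ 2) ^ (-(1 / 4 : ℝ)) : ℝ) : ℂ)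
        * Complex.exp (-((x - x₀ : ℝ) : ℂ) ^ 2 / (2 * (σ₀ : ℂ) ^ 2))
        * Complex.exp (Complex.I * (p₀ : ℂ) * (x : ℂ) ^ 2)) :
    (∫ x : ℝ, (starRingEnd ℂ) (φ x) * (‖φ x‖ ^ 2 : ℂ)
        * (-(deriv (deriv φ) x))).im
      = -p₀ / Real.sqrt (2 * π * σ₀ ^ 2) := by
  obtain rfl : φ = chirpedGaussian σ₀ x₀ p₀ := funext hφ
  set G : ℝ → ℂ := fun x => ((rexp (-(2 / σ₀ ^ 2) * (x - x₀) ^ 2) : ℝ) : ℂ) *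
    (chirpPhaseDeriv σ₀ x₀ p₀ x ^ 2 + chirpPhaseDeriv2 σ₀ p₀)
  have hintegrand (x : ℝ) : (starRingEnd ℂ) (chirpedGaussian σ₀ x₀ p₀ x)
      * (‖chirpedGaussian σ₀ x₀ p₀ x‖ ^ 2 : ℂ) * -(deriv (deriv (chirpedGaussian σ₀ x₀ p₀)) x)
      = ((-(π * σ₀ ^ 2)⁻¹ : ℝ) : ℂ) * G x := by
    rw [deriv_deriv_chirpedGaussian, mul_neg, conj_mul_norm_sq_mul_mul,
      norm_chirpedGaussian_pow_four _ _ hσ]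
    simp only [G]
    push_cast
    ring
  have him : (∫ x, G x).im
      = p₀ * ∫ x, rexp (-(2 / σ₀ ^ 2) * (x - x₀) ^ 2) * (2 - 2 * (2 / σ₀ ^ 2) * x * (x - x₀)) := by
    rw [← integral_const_mul]
    refine (integral_im (integrable_exp_mul_chirpPhaseDeriv_sq_add x₀ p₀ hσ)).symm.trans ?_
    congr 1 with x
    rw [RCLike.im_to_complex, Complex.im_ofReal_mul, im_chirpPhaseDeriv_sq_add]
    ring
  rw [funext hintegrand, integral_const_mul, Complex.im_ofReal_mul, him,
    integral_exp_neg_mul_sub_sq_mul_two_sub (by positivity),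
    show π / (2 / σ₀ ^ 2) = π * σ₀ ^ 2 / 2 by field_simp,
    show 2 * π * σ₀ ^ 2 = 2 * (π * σ₀ ^ 2) by ring, div_eq_mul_inv (-p₀),
    ← inv_mul_sqrt_div_two (by positivity)]
  ring
end
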